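/- arXiv:1411.7775 — 4 statements merged into one kernel-verified Lean document; each statement's English description precedes it below -/
import Mathlib

section
/- Let K be a number field and α a nonzero rational number. Then α is the norm of a nonzero fractional ideal of K if and only if α > 0 and for every prime number p, the greatest common divisor of the residue degrees f_{𝔭/p} of the primes 𝔭 of K lying above p divides the p-adic valuation of α. -/
open NumberField
open scoped nonZeroDivisors

/-- The residue degree of a prime `P` of `𝓞 K` over the rational prime `p`. -/
noncomputable def resDeg (K : Type*) [Field K] [NumberField K] (p : ℕ) (P : Ideal (𝓞 K)) : ℕ :=
  Ideal.inertiaDeg' (Ideal.span {(p : ℤ)}) P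

/-- The multiset of prime ideals of `𝓞 K` above `p` (with multiplicity). -/
noncomputable def primesAbove (K : Type*) [Field K] [NumberField K] (p : ℕ) :
    Multiset (Ideal (𝓞 K)) :=
  UniqueFactorizationMonoid.normalizedFactors (Ideal.span {(p : 𝓞 K)})

/-- The gcd of the residue degrees of the primes of `𝓞 K` above `p`. -/
noncomputable def gcdResDeg (K : Type*) [Field K] [NumberField K] (p : ℕ) : ℕ :=
  ((primesAbove K p).map (resDeg K p)).gcd

/-!
The norm of a prime `𝔭 ∣ p` of `𝓞 K` is `p ^ f(𝔭/p)`. Writing a nonzero fractional ideal as a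
quotient of nonzero integral ideals and factoring these into primes, the `p`-adic valuation of
its norm is an integer combination of the residue degrees above `p`, hence a multiple of their
gcd. Conversely, the norms of nonzero fractional ideals form a subgroup of `ℚˣ` containing every
`p ^ f(𝔭/p)`, hence, by Bézout, every power of `p ^ gcd`; a positive rational is the product of
the prime powers `p ^ v_p(α)`.
-/

theorem Subgroup.pow_gcd_mem {G : Type*} [Group G] {H : Subgroup G} {g : G} {s : Multiset ℕ}
    (hs : ∀ n ∈ s, g ^ n ∈ H) : g ^ s.gcd ∈ H := by
  induction s using Multiset.induction with
  | empty => simp [H.one_mem]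
  | cons a s ih =>
    have ha := hs a (Multiset.mem_cons_self a s)
    have hs' := ih fun n hn => hs n (Multiset.mem_cons_of_mem hn)
    rw [Multiset.gcd_cons, ← zpow_natCast] at *
    rw [show (gcd a s.gcd : ℕ) = Nat.gcd a s.gcd from rfl, Nat.gcd_eq_gcd_ab, zpow_add,
      zpow_mul, zpow_mul]
    exact H.mul_mem (H.zpow_mem ha _) (H.zpow_mem hs' _)

theorem Rat.exists_prod_zpow_padicValRat {α : ℚ} (hα : 0 < α) :
    ∃ S : Finset ℕ, (∀ p ∈ S, p.Prime) ∧ ∏ p ∈ S, (p : ℚ) ^ padicValRat p α = α := by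
  set m := α.num.natAbs + α.den + 1
  refine ⟨(Finset.range m).filter Nat.Prime, fun p hp => (Finset.mem_filter.1 hp).2, ?_⟩
  have hp : ∀ p ∈ (Finset.range m).filter Nat.Prime, (p : ℚ) ^ padicValRat p α =
      ((p ^ padicValNat p α.num.natAbs : ℕ) : ℚ) / ((p ^ padicValNat p α.den : ℕ) : ℚ) := by
    intro p hp
    have hp0 : (p : ℚ) ≠ 0 := by exact_mod_cast (Finset.mem_filter.1 hp).2.ne_zero
    rw [padicValRat, padicValInt, zpow_sub₀ hp0, Nat.cast_pow, Nat.cast_pow, zpow_natCast,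
      zpow_natCast]
  rw [Finset.prod_congr rfl hp, Finset.prod_div_distrib, ← Nat.cast_prod, ← Nat.cast_prod,
    Nat.prod_pow_prime_padicValNat _ (by positivity) _ (by omega),
    Nat.prod_pow_prime_padicValNat _ α.den_nz _ (by omega), Nat.cast_natAbs, Int.cast_abs,
    abs_of_pos (Int.cast_pos.2 (Rat.num_pos.2 hα)), Rat.num_div_den]

namespace NumberField

variable {K : Type*} [Field K] [NumberField K] {p : ℕ} {P : Ideal (𝓞 K)}

theorem mem_primesAbove_iff (hp : p.Prime) :
    P ∈ primesAbove K p ↔ Prime P ∧ (p : 𝓞 K) ∈ P := by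
  rw [primesAbove, UniqueFactorizationMonoid.mem_normalizedFactors_iff (by simpa using hp.ne_zero),
    Ideal.dvd_span_singleton]

theorem absNorm_under_eq_of_mem_primesAbove (hp : p.Prime) (hP : P ∈ primesAbove K p) :
    Ideal.absNorm (P.under ℤ) = p := by
  obtain ⟨hPp, hpP⟩ := (mem_primesAbove_iff hp).1 hP
  have : P.IsPrime := Ideal.isPrime_of_prime hPp
  have : NeZero P := ⟨hPp.ne_zero⟩
  rw [← Int.cast_natCast, Int.cast_mem_ideal_iff, Int.natCast_dvd_natCast] at hpP
  exact (Nat.prime_dvd_prime_iff_eq (Nat.absNorm_under_prime P) hp).1 hpP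

theorem exists_prime_mem_primesAbove (hP : Prime P) : ∃ q, q.Prime ∧ P ∈ primesAbove K q := by
  have : P.IsPrime := Ideal.isPrime_of_prime hP
  have : NeZero P := ⟨hP.ne_zero⟩
  exact ⟨_, Nat.absNorm_under_prime P,
    (mem_primesAbove_iff (Nat.absNorm_under_prime P)).2 ⟨hP, Int.absNorm_under_mem P⟩⟩

theorem absNorm_eq_pow_resDeg (hp : p.Prime) (hP : P ∈ primesAbove K p) :
    Ideal.absNorm P = p ^ resDeg K p P := by
  have := Int.liesOver_span_absNorm P
  rw [absNorm_under_eq_of_mem_primesAbove hp hP] at this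
  exact Ideal.absNorm_eq_pow_inertiaDeg' P hp

theorem gcdResDeg_dvd_padicValNat_absNorm_of_prime (hp : p.Prime) (hP : Prime P) :
    gcdResDeg K p ∣ padicValNat p (Ideal.absNorm P) := by
  obtain ⟨q, hq, hPq⟩ := exists_prime_mem_primesAbove hP
  rw [absNorm_eq_pow_resDeg hq hPq]
  obtain rfl | hpq := eq_or_ne p q
  · have := Fact.mk hp
    rw [padicValNat.prime_pow]
    exact Multiset.gcd_dvd (Multiset.mem_map_of_mem _ hPq)
  · rw [padicValNat.eq_zero_of_not_dvd fun h =>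
      hpq ((Nat.prime_dvd_prime_iff_eq hp hq).1 (hp.dvd_of_dvd_pow h))]
    exact dvd_zero _

theorem gcdResDeg_dvd_padicValNat_absNorm (hp : p.Prime) {J : Ideal (𝓞 K)} (hJ : J ≠ ⊥) :
    gcdResDeg K p ∣ padicValNat p (Ideal.absNorm J) := by
  have := Fact.mk hp
  induction J using UniqueFactorizationMonoid.induction_on_prime with
  | h₁ => exact absurd rfl hJ
  | h₂ J hu =>
    rw [Ideal.isUnit_iff.1 hu, Ideal.absNorm_top, padicValNat_one_right]
    exact dvd_zero _
  | h₃ J P hJ0 hP ih =>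
    rw [map_mul, padicValNat.mul (Ideal.absNorm_eq_zero_iff.not.2 hP.ne_zero)
      (Ideal.absNorm_eq_zero_iff.not.2 hJ0)]
    exact dvd_add (gcdResDeg_dvd_padicValNat_absNorm_of_prime hp hP) (ih hJ0)

theorem gcdResDeg_dvd_padicValRat_absNorm (hp : p.Prime) {I : FractionalIdeal (𝓞 K)⁰ K}
    (hI : I ≠ 0) : (gcdResDeg K p : ℤ) ∣ padicValRat p (FractionalIdeal.absNorm I) := by
  have := Fact.mk hp
  have hnum : I.num ≠ ⊥ := fun h =>
    hI (FractionalIdeal.zero_of_num_eq_bot zero_notMem_nonZeroDivisors h)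
  have hden : Ideal.span {(I.den : 𝓞 K)} ≠ ⊥ := by
    simp [nonZeroDivisors.coe_ne_zero]
  have hnorm : FractionalIdeal.absNorm I =
      (Ideal.absNorm I.num : ℚ) / (Ideal.absNorm (Ideal.span {(I.den : 𝓞 K)}) : ℚ) := by
    rw [FractionalIdeal.absNorm_eq, Ideal.absNorm_span_singleton, Nat.cast_natAbs, Int.cast_abs]
  rw [hnorm, padicValRat.div (Nat.cast_ne_zero.2 (Ideal.absNorm_eq_zero_iff.not.2 hnum))
    (Nat.cast_ne_zero.2 (Ideal.absNorm_eq_zero_iff.not.2 hden)), padicValRat.of_nat,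
    padicValRat.of_nat]
  exact dvd_sub (Int.natCast_dvd_natCast.2 (gcdResDeg_dvd_padicValNat_absNorm hp hnum))
    (Int.natCast_dvd_natCast.2 (gcdResDeg_dvd_padicValNat_absNorm hp hden))

variable (K) in
noncomputable def normGroup : Subgroup ℚˣ :=
  (Units.map (FractionalIdeal.absNorm : FractionalIdeal (𝓞 K)⁰ K →*₀ ℚ).toMonoidHom).range

theorem mem_normGroup_iff {u : ℚˣ} :
    u ∈ normGroup K ↔ ∃ I : FractionalIdeal (𝓞 K)⁰ K, I ≠ 0 ∧ FractionalIdeal.absNorm I = u :=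
  ⟨fun ⟨I, hI⟩ => ⟨I, I.ne_zero, congrArg Units.val hI⟩,
    fun ⟨I, hI, hIu⟩ => ⟨Units.mk0 I hI, Units.ext hIu⟩⟩

theorem zpow_mem_normGroup (hp : p.Prime) {v : ℤ} (hv : (gcdResDeg K p : ℤ) ∣ v) :
    Units.mk0 (p : ℚ) (Nat.cast_ne_zero.2 hp.ne_zero) ^ v ∈ normGroup K := by
  obtain ⟨k, rfl⟩ := hv
  rw [zpow_mul, zpow_natCast]
  refine Subgroup.zpow_mem _ (Subgroup.pow_gcd_mem (s := (primesAbove K p).map (resDeg K p)) ?_) k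
  intro n hn
  obtain ⟨P, hP, rfl⟩ := Multiset.mem_map.1 hn
  refine mem_normGroup_iff.2 ⟨P, ?_, ?_⟩
  · exact FractionalIdeal.coeIdeal_ne_zero.2 ((mem_primesAbove_iff hp).1 hP).1.ne_zero
  · rw [FractionalIdeal.coeIdeal_absNorm, absNorm_eq_pow_resDeg hp hP]
    simp

end NumberField

theorem idealNorm_iff_general (K : Type*) [Field K] [NumberField K] (α : ℚ) :
    (∃ I : FractionalIdeal (𝓞 K)⁰ K, I ≠ 0 ∧ FractionalIdeal.absNorm I = α) ↔
      (0 < α ∧ ∀ p : ℕ, p.Prime → (gcdResDeg K p : ℤ) ∣ padicValRat p α) := by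
  constructor
  · rintro ⟨I, hI, rfl⟩
    refine ⟨(FractionalIdeal.absNorm_nonneg I).lt_of_ne' ?_, fun p hp =>
      gcdResDeg_dvd_padicValRat_absNorm hp hI⟩
    rwa [Ne, FractionalIdeal.absNorm_eq_zero_iff]
  · rintro ⟨hpos, hdvd⟩
    obtain ⟨S, hS, hprod⟩ := Rat.exists_prod_zpow_padicValRat hpos
    -- Passing to the image in `ℚ` lets the product over `S` avoid `Units.mk0` side conditions.
    have hmem : α ∈ (normGroup K).toSubmonoid.map (Units.coeHom ℚ) := by
      rw [← hprod]
      exact Submonoid.prod_mem _ fun p hp =>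
        ⟨_, zpow_mem_normGroup (hS p hp) (hdvd p (hS p hp)), by simp⟩
    obtain ⟨u, hu, rfl⟩ := hmem
    exact mem_normGroup_iff.1 hu

/-- A nonzero rational `α` is the norm of a nonzero fractional ideal of the
number field `K` if and only if `α > 0` and for every prime `p` the gcd of the residue
degrees of the primes of `K` above `p` divides the `p`-adic valuation of `α`. -/
theorem idealNorm_iff (K : Type*) [Field K] [NumberField K] (α : ℚ) (hα : α ≠ 0) :
    (∃ I : FractionalIdeal (𝓞 K)⁰ K, I ≠ 0 ∧ FractionalIdeal.absNorm I = α) ↔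
      (0 < α ∧ ∀ p : ℕ, p.Prime → (gcdResDeg K p : ℤ) ∣ padicValRat p α) :=
  idealNorm_iff_general K α
end

section
/- Let K = ℚ(β) be a number field with real embeddings σ_1, …, σ_r ordered so that σ_1(β) < … < σ_r(β), and let m be the number of indices i with σ_i(β) < 0. If m is odd, then N_{K/ℚ}(β) < 0. If m is even and r ≥ 1, then there exists a rational number ε such that N_{K/ℚ}(β + ε) < 0. -/
/-!
The non-real complex embeddings of `K` come in conjugate pairs, so they contribute a positive
real factor to `N(x) = ∏_φ φ(x)`; hence `N(x)` has the sign of `∏_σ σ(x)` over the real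
embeddings, namely `(-1)^m` when `x ≠ 0`. As `β` generates `K`, the real numbers `σ(β)` are
distinct, so a rational `q` just above the smallest of them makes exactly one of the
`σ(β - q)` negative, and `ε = -q` works.
-/

open Finset NumberField NumberField.ComplexEmbedding
open scoped IntermediateField

theorem prod_neg_of_odd_card_neg {ι : Type*} [Fintype ι] {f : ι → ℝ} (hf : ∀ i, f i ≠ 0)
    (h : Odd (Nat.card {i // f i < 0})) : ∏ i, f i < 0 := by
  classical
  have hsign : ∀ i, SignType.sign (f i) = if f i < 0 then -1 else 1 := fun i => by
    rcases (hf i).lt_or_gt with hi | hi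
    · simp [hi]
    · simp [hi, hi.not_gt]
  rw [Nat.card_eq_fintype_card, Fintype.card_subtype] at h
  rw [← sign_eq_neg_one_iff, ← signHom_apply, map_prod]
  simp only [signHom_apply, hsign, prod_ite, prod_const, one_pow, mul_one, h.neg_one_pow]

theorem exists_rat_card_lt_eq_one {ι : Type*} [Finite ι] [Nonempty ι] {f : ι → ℝ}
    (hf : Function.Injective f) : ∃ q : ℚ, Nat.card {i // f i < q} = 1 := by
  obtain ⟨i₀, hi₀⟩ := Finite.exists_min f
  have hgap : ∀ᶠ x in nhds (f i₀), ∀ i, i ≠ i₀ → x < f i := by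
    refine Filter.eventually_all.2 fun i => ?_
    by_cases hi : i = i₀
    · exact Filter.Eventually.of_forall fun _ h => absurd hi h
    · exact (eventually_lt_nhds ((hi₀ i).lt_of_ne (hf.ne (Ne.symm hi)))).mono fun _ h _ => h
  obtain ⟨u, hu, hIco⟩ := exists_Ico_subset_of_mem_nhds hgap ⟨f i₀ + 1, by linarith⟩
  obtain ⟨q, hq₀, hqu⟩ := exists_rat_btwn hu
  refine ⟨q, Nat.card_eq_one_iff_exists.2 ⟨⟨i₀, hq₀⟩, fun ⟨i, hi⟩ => ?_⟩⟩
  by_contra hne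
  exact (hIco ⟨hq₀.le, hqu⟩ i fun h => hne (Subtype.ext h)).not_gt hi

namespace NumberField

variable {K : Type*} [Field K]

variable (K) in
noncomputable def realEmbeddingEquiv : (K →+* ℝ) ≃ {φ : K →+* ℂ // IsReal φ} where
  toFun τ := ⟨Complex.ofRealHom.comp τ, by
    rw [isReal_iff]; ext x; simp [conjugate_coe_eq]⟩
  invFun φ := φ.2.embedding
  left_inv τ := by
    ext x
    exact Complex.ofReal_injective (IsReal.coe_embedding_apply _ x)
  right_inv φ := by
    ext x
    exact φ.2.coe_embedding_apply x

variable [NumberField K]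

open scoped Classical in
theorem prod_isReal_embeddings_apply (x : K) :
    ∏ φ ∈ {φ : K →+* ℂ | IsReal φ}, φ x = ((∏ τ : K →+* ℝ, τ x : ℝ) : ℂ) := by
  rw [prod_subtype _ (fun φ => mem_filter_univ φ) (fun φ : K →+* ℂ => φ x),
    ← Equiv.prod_comp (realEmbeddingEquiv K), Complex.ofReal_prod]
  rfl

open scoped Classical in
theorem prod_not_isReal_embeddings_apply {x : K} (hx : x ≠ 0) :
    ∏ φ ∈ {φ : K →+* ℂ | ¬IsReal φ}, φ x = ((∏ φ ∈ {φ : K →+* ℂ | ¬IsReal φ}, ‖φ x‖ : ℝ) : ℂ) := by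
  have hnorm : ∀ φ : K →+* ℂ, (‖φ x‖ : ℂ) ≠ 0 := fun φ => by simpa using hx
  have hphase : ∏ φ ∈ {φ : K →+* ℂ | ¬IsReal φ}, φ x / ‖φ x‖ = 1 := by
    refine prod_involution (fun φ _ => conjugate φ) (fun φ _ => ?_) (fun φ hφ _ => ?_)
      (fun φ hφ => by simpa [isReal_conjugate_iff] using hφ) (fun φ _ => star_star φ)
    · rw [conjugate_coe_eq, div_mul_div_comm, Complex.mul_conj, Complex.normSq_eq_norm_sq,
        Complex.norm_conj, Complex.ofReal_pow, sq, div_self (mul_ne_zero (hnorm φ) (hnorm φ))]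
    · exact fun h => (mem_filter.1 hφ).2 (isReal_iff.2 h)
  calc ∏ φ ∈ {φ : K →+* ℂ | ¬IsReal φ}, φ x
      = ∏ φ ∈ {φ : K →+* ℂ | ¬IsReal φ}, (‖φ x‖ : ℂ) * (φ x / ‖φ x‖) :=
        prod_congr rfl fun φ _ => (mul_div_cancel₀ _ (hnorm φ)).symm
    _ = _ := by rw [prod_mul_distrib, hphase, mul_one, Complex.ofReal_prod]

open scoped Classical in
theorem ratCast_norm_eq_prod_realEmbeddings_mul (x : K) (hx : x ≠ 0) :
    (Algebra.norm ℚ x : ℝ) =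
      (∏ τ : K →+* ℝ, τ x) * ∏ φ ∈ {φ : K →+* ℂ | ¬IsReal φ}, ‖φ x‖ := by
  have hprod : ((Algebra.norm ℚ x : ℚ) : ℂ) = ∏ φ : K →+* ℂ, φ x := by
    rw [← eq_ratCast (algebraMap ℚ ℂ), Algebra.norm_eq_prod_embeddings ℚ ℂ x]
    exact Fintype.prod_equiv (RingHom.equivRatAlgHom K ℂ).symm _ _ fun _ => rfl
  apply Complex.ofReal_injective
  rw [Complex.ofReal_ratCast, hprod, ← prod_filter_mul_prod_filter_not univ IsReal,
    prod_isReal_embeddings_apply, prod_not_isReal_embeddings_apply hx, Complex.ofReal_mul]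

theorem norm_neg_of_odd_card_neg (x : K) (h : Odd (Nat.card {σ : K →+* ℝ // σ x < 0})) :
    Algebra.norm ℚ x < 0 := by
  classical
  have hx : x ≠ 0 := by
    rintro rfl
    simp at h
  have hpos : 0 < ∏ φ ∈ {φ : K →+* ℂ | ¬IsReal φ}, ‖φ x‖ :=
    prod_pos fun φ _ => by simpa using hx
  have := mul_neg_of_neg_of_pos (prod_neg_of_odd_card_neg (fun τ => (map_ne_zero τ).2 hx) h) hpos
  rw [← ratCast_norm_eq_prod_realEmbeddings_mul x hx] at this
  exact_mod_cast this

theorem injective_realEmbeddings_apply {β : K} (hβ : ℚ⟮β⟯ = ⊤) :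
    Function.Injective fun σ : K →+* ℝ => σ β := fun σ τ h =>
  RingHom.ext <| AlgHom.congr_fun <|
    AlgHom.ext_of_adjoin_eq_top (IntermediateField.adjoin_eq_top_iff.1 hβ)
      (φ₁ := σ.toRatAlgHom) (φ₂ := τ.toRatAlgHom) (by simpa using h)

end NumberField

/-- Let `K = ℚ(β)` be a number field with at least one real embedding, and
let `m` be the number of real embeddings `σ` with `σ β < 0`.  If `m` is odd then
`N_{K/ℚ}(β) < 0`; if `m` is even then there is a rational `ε` with `N_{K/ℚ}(β + ε) < 0`. -/
theorem norm_neg_of_real_embeddings (K : Type*) [Field K] [NumberField K] (β : K)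
    (hgen : IntermediateField.adjoin ℚ {β} = ⊤) (hr : Nonempty (K →+* ℝ)) :
    (Odd (Nat.card {σ : K →+* ℝ // σ β < 0}) → Algebra.norm ℚ β < 0) ∧
    (Even (Nat.card {σ : K →+* ℝ // σ β < 0}) →
      ∃ ε : ℚ, Algebra.norm ℚ (β + algebraMap ℚ K ε) < 0) := by
  refine ⟨norm_neg_of_odd_card_neg β, fun _ => ?_⟩
  obtain ⟨q, hq⟩ := exists_rat_card_lt_eq_one (injective_realEmbeddings_apply hgen)
  refine ⟨-q, norm_neg_of_odd_card_neg _ ?_⟩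
  have hshift (σ : K →+* ℝ) : σ (β + algebraMap ℚ K (-q)) < 0 ↔ σ β < q := by simp
  rw [Nat.card_congr (Equiv.subtypeEquivRight hshift), hq]
  exact odd_one
end

section
/- Let K be a number field. Then the natural inclusion induces an isomorphism (ℚ_{>0} ∩ N_{K/ℚ}J_K)/(ℚ_{>0} ∩ N_{K/ℚ}K^*) ≅ (ℚ^* ∩ N_{K/ℚ}J_K)/N_{K/ℚ}K^*, i.e., the positive part of the knot group equals the whole knot group 𝔎(K/ℚ). -/
open scoped TensorProduct
open NumberField IsDedekindDomain

/-- The subgroup of `kˣ` of elements that are norms of units of `F ⊗[k] K`,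
for `F` a completion of `k`. -/
def localNormsAt (k K F : Type*) [Field k] [Field K] [Algebra k K]
    [Field F] [Algebra k F] : Subgroup kˣ where
  carrier := {c | ∃ β : (F ⊗[k] K)ˣ,
    Units.map (Algebra.norm F) β = Units.map (algebraMap k F).toMonoidHom c}
  one_mem' := ⟨1, by simp⟩
  mul_mem' := by
    rintro a b ⟨α, hα⟩ ⟨β, hβ⟩
    exact ⟨α * β, by simp [hα, hβ]⟩
  inv_mem' := by
    rintro a ⟨α, hα⟩
    exact ⟨α⁻¹, by simp [hα]⟩

/-- The subgroup of `kˣ` of everywhere local norms from `K`: elements of `k^*` that are local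
norms at every finite place and every archimedean place of `k`, i.e. `k^* ∩ N_{K/k} J_K`. -/
noncomputable def everywhereLocalNorms (k K : Type*) [Field k] [NumberField k] [Field K]
    [Algebra k K] : Subgroup kˣ :=
  (⨅ v : HeightOneSpectrum (𝓞 k), localNormsAt k K (v.adicCompletion k)) ⊓
  ((⨅ σ : k →+* ℝ, letI := σ.toAlgebra; localNormsAt k K ℝ) ⊓
   (⨅ σ : k →+* ℂ, letI := σ.toAlgebra; localNormsAt k K ℂ))

/-- The subgroup `N_{K/k} K^*` of `kˣ` of global norms from `K`. -/
noncomputable def globalNorms (k K : Type*) [Field k] [Field K] [Algebra k K] : Subgroup kˣ :=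
  (Units.map (Algebra.norm k : K →* k)).range

/-- The knot group `𝔎(K/k) = (k^* ∩ N_{K/k} J_K) / N_{K/k} K^*`. -/
noncomputable def knotGroup (k K : Type*) [Field k] [NumberField k] [Field K] [Algebra k K] :=
  everywhereLocalNorms k K ⧸ (globalNorms k K).subgroupOf (everywhereLocalNorms k K)

noncomputable instance (k K : Type*) [Field k] [NumberField k] [Field K] [Algebra k K] :
    CommGroup (knotGroup k K) :=
  inferInstanceAs (CommGroup (_ ⧸ _))

open scoped nonZeroDivisors

/-- The subgroup of positive rational units. -/
def posRatUnits : Subgroup ℚˣ where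
  carrier := {u | 0 < (u : ℚ)}
  one_mem' := by norm_num
  mul_mem' := by
    intro a b ha hb
    simp only [Set.mem_setOf_eq, Units.val_mul] at *
    exact mul_pos ha hb
  inv_mem' := by
    intro a ha
    simp only [Set.mem_setOf_eq] at *
    rw [Units.val_inv_eq_inv_val]
    exact inv_pos.mpr ha

/-- The subgroup of `ℚˣ` of norms of nonzero fractional ideals of `K`,
i.e. `N_{K/ℚ} I_K`. -/
noncomputable def idealNorms (K : Type*) [Field K] [NumberField K] : Subgroup ℚˣ where
  carrier := {u | ∃ I : FractionalIdeal (𝓞 K)⁰ K, I ≠ 0 ∧ FractionalIdeal.absNorm I = (u : ℚ)}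
  one_mem' := ⟨1, one_ne_zero, by simp⟩
  mul_mem' := by
    rintro a b ⟨I, hI, hIa⟩ ⟨J, hJ, hJb⟩
    exact ⟨I * J, mul_ne_zero hI hJ, by simp [hIa, hJb]⟩
  inv_mem' := by
    rintro a ⟨I, hI, hIa⟩
    refine ⟨I⁻¹, inv_ne_zero hI, ?_⟩
    rw [map_inv₀, hIa]
    simp

/-!
Global norms are local norms everywhere because the norm commutes with base change. Conversely,
a negative everywhere-local norm `c` is the norm of a unit of `ℝ ⊗[ℚ] K`. Since `K` is dense in
`ℝ ⊗[ℚ] K` and the norm is continuous there (a determinant of a matrix linear in the coordinates),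
some `α ∈ K` has negative norm; then `c = (c / N α) · N α` with `c / N α > 0`, so every class of the
knot group has a positive representative, and the kernel of the induced map is visibly
`ℚ_{>0} ∩ N_{K/ℚ} K^*`.
-/

noncomputable def Subgroup.quotientInfMulEquivOfLeSup {G : Type*} [CommGroup G]
    {P H N : Subgroup G} (hNH : N ≤ H) (hH : H ≤ P ⊔ N) :
    (↥(P ⊓ H) ⧸ (P ⊓ N).subgroupOf (P ⊓ H)) ≃* (↥H ⧸ N.subgroupOf H) :=
  let φ : ↥(P ⊓ H) →* ↥H ⧸ N.subgroupOf H :=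
    (QuotientGroup.mk' _).comp (Subgroup.inclusion inf_le_right)
  have hsurj : Function.Surjective φ := by
    rintro ⟨x, hx⟩
    obtain ⟨p, hp, n, hn, rfl⟩ := Subgroup.mem_sup.mp (hH hx)
    have hpH : p ∈ H := by simpa using H.mul_mem hx (H.inv_mem (hNH hn))
    refine ⟨⟨p, hp, hpH⟩, QuotientGroup.eq.mpr ?_⟩
    simpa [Subgroup.mem_subgroupOf] using hn
  have hker : (P ⊓ N).subgroupOf (P ⊓ H) = φ.ker := by
    ext x
    simpa [φ, Subgroup.mem_subgroupOf] using fun _ => x.2.1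
  (QuotientGroup.quotientMulEquivOfEq hker).trans
    (QuotientGroup.quotientKerEquivOfSurjective φ hsurj)

theorem Algebra.norm_one_tmul {R A B : Type*} [CommRing R] [CommRing A] [Algebra R A] [Ring B]
    [Algebra R B] [Module.Free R B] [Module.Finite R B] (b : B) :
    Algebra.norm A ((1 : A) ⊗ₜ[R] b) = algebraMap R A (Algebra.norm R b) := by
  have : Algebra.lmul A (A ⊗[R] B) (1 ⊗ₜ b) = (Algebra.lmul R B b).baseChange A := by
    ext x
    simp [Algebra.TensorProduct.tmul_mul_tmul]
  rw [Algebra.norm_apply, this, LinearMap.det_baseChange, Algebra.norm_apply]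

theorem exists_norm_neg_of_norm_realTensor_neg {A : Type*} [Ring A] [Algebra ℚ A]
    [FiniteDimensional ℚ A] {y : ℝ ⊗[ℚ] A} (hy : Algebra.norm ℝ y < 0) :
    ∃ a : A, Algebra.norm ℚ a < 0 := by
  let b := Module.finBasis ℚ A
  let bR := b.baseChange ℝ
  let normOfCoords : (Fin (Module.finrank ℚ A) → ℝ) → ℝ :=
    fun v => Algebra.norm ℝ (bR.equivFun.symm v)
  have hcont : Continuous normOfCoords := by
    have : normOfCoords = fun v => (Algebra.leftMulMatrix bR (bR.equivFun.symm v)).det :=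
      funext fun v => Algebra.norm_eq_matrix_det bR _
    rw [this]
    exact ((Algebra.leftMulMatrix bR).toLinearMap.comp
      bR.equivFun.symm.toLinearMap).continuous_of_finiteDimensional.matrix_det
  have hdense : DenseRange fun (q : Fin (Module.finrank ℚ A) → ℚ) i => (q i : ℝ) :=
    DenseRange.piMap fun _ => Rat.denseRange_cast
  obtain ⟨q, hq⟩ := hdense.exists_mem_open (isOpen_lt hcont continuous_const)
    ⟨bR.equivFun y, by simpa [normOfCoords] using hy⟩
  refine ⟨b.equivFun.symm q, ?_⟩
  have hq' : bR.equivFun.symm (fun i => (q i : ℝ)) = 1 ⊗ₜ b.equivFun.symm q := by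
    simp only [Module.Basis.equivFun_symm_apply, Module.Basis.baseChange_apply,
      TensorProduct.tmul_sum, TensorProduct.tmul_smul, bR]
    exact Finset.sum_congr rfl fun i _ => algebraMap_smul ℝ (q i) _
  simp only [Set.mem_ofPred_eq, normOfCoords, hq', Algebra.norm_one_tmul] at hq
  rwa [eq_ratCast, Rat.cast_lt_zero] at hq

theorem globalNorms_le_localNormsAt (k K F : Type*) [Field k] [Field K] [Algebra k K]
    [FiniteDimensional k K] [Field F] [Algebra k F] : globalNorms k K ≤ localNormsAt k K F := by
  rintro _ ⟨α, rfl⟩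
  exact ⟨Units.map (Algebra.TensorProduct.includeRight : K →ₐ[k] F ⊗[k] K).toMonoidHom α,
    Units.ext (Algebra.norm_one_tmul (α : K))⟩

theorem globalNorms_le_everywhereLocalNorms (k K : Type*) [Field k] [NumberField k] [Field K]
    [Algebra k K] [FiniteDimensional k K] : globalNorms k K ≤ everywhereLocalNorms k K :=
  le_inf (le_iInf fun _ => globalNorms_le_localNormsAt k K _) <|
    le_inf (le_iInf fun σ => letI := σ.toAlgebra; globalNorms_le_localNormsAt k K ℝ)
      (le_iInf fun σ => letI := σ.toAlgebra; globalNorms_le_localNormsAt k K ℂ)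

theorem everywhereLocalNorms_le_localNormsAt_real (K : Type*) [Field K] [Algebra ℚ K] :
    everywhereLocalNorms ℚ K ≤ localNormsAt ℚ K ℝ := by
  intro c hc
  have h := Subgroup.mem_iInf.mp (Subgroup.mem_inf.mp (Subgroup.mem_inf.mp hc).2).1 (Rat.castHom ℝ)
  rwa [Subsingleton.elim (Rat.castHom ℝ).toAlgebra (inferInstance : Algebra ℚ ℝ)] at h

theorem exists_mem_globalNorms_neg_of_mem_localNormsAt_real {K : Type*} [Field K] [Algebra ℚ K]
    [FiniteDimensional ℚ K] {c : ℚˣ} (hc : c ∈ localNormsAt ℚ K ℝ) (hneg : (c : ℚ) < 0) :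
    ∃ u ∈ globalNorms ℚ K, (u : ℚ) < 0 := by
  obtain ⟨β, hβ⟩ := hc
  have hβneg : Algebra.norm ℝ (β : ℝ ⊗[ℚ] K) < 0 := by
    rw [show Algebra.norm ℝ (β : ℝ ⊗[ℚ] K) = algebraMap ℚ ℝ c from congrArg Units.val hβ,
      eq_ratCast, Rat.cast_lt_zero]
    exact hneg
  obtain ⟨α, hα⟩ := exists_norm_neg_of_norm_realTensor_neg hβneg
  have hα0 : α ≠ 0 := by
    rintro rfl
    simp at hα
  exact ⟨Units.map (Algebra.norm ℚ : K →* ℚ) (Units.mk0 α hα0), ⟨_, rfl⟩, hα⟩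

theorem everywhereLocalNorms_le_posRatUnits_sup_globalNorms (K : Type*) [Field K]
    [NumberField K] : everywhereLocalNorms ℚ K ≤ posRatUnits ⊔ globalNorms ℚ K := by
  intro c hc
  rcases (Units.ne_zero c).lt_or_gt with hneg | hpos
  · obtain ⟨u, hu, hu_neg⟩ := exists_mem_globalNorms_neg_of_mem_localNormsAt_real
      (everywhereLocalNorms_le_localNormsAt_real K hc) hneg
    refine Subgroup.mem_sup.mpr ⟨c * u⁻¹, ?_, u, hu, inv_mul_cancel_right c u⟩
    show (0 : ℚ) < ((c * u⁻¹ : ℚˣ) : ℚ)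
    rw [Units.val_mul, Units.val_inv_eq_inv_val]
    exact mul_pos_of_neg_of_neg hneg (inv_lt_zero.mpr hu_neg)
  · exact Subgroup.mem_sup.mpr ⟨c, hpos, 1, one_mem _, mul_one c⟩

/-- The natural inclusion induces an isomorphism
`(ℚ_{>0} ∩ N_{K/ℚ}J_K)/(ℚ_{>0} ∩ N_{K/ℚ}K^*) ≅ (ℚ^* ∩ N_{K/ℚ}J_K)/N_{K/ℚ}K^*`,
i.e. the positive part of the knot group is the whole knot group. -/
theorem pos_knotGroup_iso_knotGroup (K : Type*) [Field K] [NumberField K] :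
    Nonempty
      ((↥(posRatUnits ⊓ everywhereLocalNorms ℚ K) ⧸
          (posRatUnits ⊓ globalNorms ℚ K).subgroupOf (posRatUnits ⊓ everywhereLocalNorms ℚ K))
        ≃* knotGroup ℚ K) :=
  ⟨Subgroup.quotientInfMulEquivOfLeSup (globalNorms_le_everywhereLocalNorms ℚ K)
    (everywhereLocalNorms_le_posRatUnits_sup_globalNorms K)⟩
end

section
/- Let K be a number field and suppose α ∈ ℚ_{>0} is an everywhere local norm from K, i.e., α ∈ N_{K/ℚ}J_K. Then α is the norm of a nonzero fractional ideal of K: α ∈ N_{K/ℚ}I_K. -/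
/-!
A positive rational lies in the group `N(I_K)` of ideal norms as soon as each of its `p`-parts
`p ^ v_p(u)` does, and `N(I_K)` is stable under taking `p`-parts because it is generated by the
norms `p ^ f` of prime ideals. The local condition at `p` provides the `p`-part of `u`: since `ℚ`
is dense in `ℚ_p` and the norm of `ℚ_p ⊗ K` is continuous, a local norm `u = N(β)` is
approximated by global norms `N(x)`, `x ∈ K^*`, hence `v_p(N x) = v_p(u)` for a suitable `x`,
and `|N x| = N((x))` is an ideal norm with the same `p`-part as `u`.
-/

open scoped TensorProduct
open NumberField IsDedekindDomain

open scoped nonZeroDivisors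

open scoped Topology

namespace Algebra

lemma norm_one_tmul_s19 {k K F : Type*} [Field k] [Field K] [Algebra k K] [FiniteDimensional k K]
    [Field F] [Algebra k F] (x : K) :
    Algebra.norm F ((1 : F) ⊗ₜ[k] x) = algebraMap k F (Algebra.norm k x) := by
  rw [Algebra.norm_apply, Algebra.norm_apply, ← LinearMap.det_baseChange]
  congr 1
  ext y
  simp

/-- In coordinates for a `k`-basis of `K` the norm of `F ⊗[k] K` is a polynomial, hence
continuous, and the points with coordinates in `k` are the `1 ⊗ x`. -/
lemma exists_algebraMap_norm_mem_of_mem_nhds {k K F : Type*} [Field k] [Field K] [Algebra k K]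
    [FiniteDimensional k K] [Field F] [Algebra k F] [TopologicalSpace F] [IsTopologicalRing F]
    (hdense : DenseRange (algebraMap k F)) (β : F ⊗[k] K) {U : Set F}
    (hU : U ∈ 𝓝 (Algebra.norm F β)) : ∃ x : K, algebraMap k F (Algebra.norm k x) ∈ U := by
  let b := Module.Free.chooseBasis k K
  let B := Algebra.TensorProduct.basis F b
  let φ : (Module.Free.ChooseBasisIndex k K → F) → F := fun c ↦ Algebra.norm F (B.equivFun.symm c)
  have hφ : Continuous φ := by
    simp only [φ, Algebra.norm_eq_matrix_det B]
    exact Continuous.matrix_det <| LinearMap.continuous_on_pi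
      ((Algebra.leftMulMatrix B).toLinearMap ∘ₗ B.equivFun.symm.toLinearMap)
  have hφβ : φ (B.equivFun β) = Algebra.norm F β := by
    simp only [φ, LinearEquiv.symm_apply_apply]
  obtain ⟨q, hq⟩ := (DenseRange.piMap fun _ ↦ hdense).mem_nhds
    (hφ.continuousAt.preimage_mem_nhds (hφβ ▸ hU))
  have hBq : B.equivFun.symm (Pi.map (fun _ ↦ algebraMap k F) q) = 1 ⊗ₜ b.equivFun.symm q := by
    simp [B, Module.Basis.equivFun_symm_apply, TensorProduct.tmul_sum,
      Algebra.TensorProduct.basis_apply, Algebra.algebraMap_eq_smul_one]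
  refine ⟨b.equivFun.symm q, ?_⟩
  rwa [← norm_one_tmul_s19, ← hBq]

end Algebra

lemma exists_valued_norm_eq_of_mem_localNormsAt {k K F Γ₀ : Type*} [Field k] [Field K]
    [Algebra k K] [FiniteDimensional k K] [Field F] [Algebra k F]
    [LinearOrderedCommGroupWithZero Γ₀] [Valued F Γ₀] (hdense : DenseRange (algebraMap k F))
    {u : kˣ} (hu : u ∈ localNormsAt k K F) :
    ∃ x : K, Valued.v (algebraMap k F (Algebra.norm k x)) = Valued.v (algebraMap k F u) := by
  obtain ⟨β, hβ⟩ := hu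
  have hβ' : Algebra.norm F (β : F ⊗[k] K) = algebraMap k F u := congrArg Units.val hβ
  exact Algebra.exists_algebraMap_norm_mem_of_mem_nhds hdense (β : F ⊗[k] K)
    (U := {y | Valued.v y = Valued.v (algebraMap k F u)})
    (by rw [hβ']; exact Valued.locally_const (by simp))

open Rat.HeightOneSpectrum in
lemma exists_padicValRat_norm_eq_of_mem_localNormsAt {K : Type*} [Field K] [NumberField K]
    {p : Nat.Primes} {u : ℚˣ}
    (hu : u ∈ localNormsAt ℚ K ((primesEquiv.symm p : HeightOneSpectrum (𝓞 ℚ)).adicCompletion ℚ)) :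
    ∃ x : K, x ≠ 0 ∧ padicValRat p (Algebra.norm ℚ x) = padicValRat p u := by
  set v : HeightOneSpectrum (𝓞 ℚ) := primesEquiv.symm p
  have : Fact p.1.Prime := ⟨p.2⟩
  obtain ⟨x, hx⟩ := exists_valued_norm_eq_of_mem_localNormsAt
    (HeightOneSpectrum.denseRange_algebraMap ℚ v) hu
  have hcoe (r : ℚ) : Valued.v (algebraMap ℚ (v.adicCompletion ℚ) r) = v.valuation ℚ r :=
    HeightOneSpectrum.valuedAdicCompletion_eq_valuation' v r
  rw [hcoe, hcoe] at hx
  have hNx : Algebra.norm ℚ x ≠ 0 := by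
    rw [← (v.valuation ℚ).ne_zero_iff, hx]
    simp
  have hv : (v.valuation ℚ).IsEquiv (Rat.padicValuation p) := by
    simpa [v] using valuation_equiv_padicValuation v
  refine ⟨x, by simpa using hNx, ?_⟩
  simpa [Rat.padicValuation, hNx] using hv.eq_iff.1 hx

lemma padicValRat.abs (p : ℕ) (q : ℚ) : padicValRat p |q| = padicValRat p q := by
  rcases abs_choice q with h | h <;> simp [h]

namespace Rat

lemma prod_primesBelow_zpow_padicValRat {r : ℚ} (hr : 0 < r) {m : ℕ} (hnum : r.num.natAbs < m)
    (hden : r.den < m) : ∏ p ∈ m.primesBelow, (p : ℚ) ^ padicValRat p r = r := by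
  have hnum0 : r.num.natAbs ≠ 0 := by simpa using hr.ne'
  calc ∏ p ∈ m.primesBelow, (p : ℚ) ^ padicValRat p r
      = (∏ p ∈ m.primesBelow, (p : ℚ) ^ padicValNat p r.num.natAbs) /
          ∏ p ∈ m.primesBelow, (p : ℚ) ^ padicValNat p r.den := by
        rw [← Finset.prod_div_distrib]
        refine Finset.prod_congr rfl fun p hp ↦ ?_
        have hp0 : (p : ℚ) ≠ 0 := by simpa using (Nat.prime_of_mem_primesBelow hp).ne_zero
        rw [padicValRat, padicValInt, zpow_sub₀ hp0, zpow_natCast, zpow_natCast]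
    _ = r := by
        rw_mod_cast [Nat.primesBelow_eq_filter_range,
          Nat.prod_pow_prime_padicValNat _ hnum0 _ hnum,
          Nat.prod_pow_prime_padicValNat _ r.den_nz _ hden]
        rw [Nat.cast_natAbs, abs_of_pos (Rat.num_pos.2 hr), r.num_div_den]

variable (p : ℕ) [Fact p.Prime]

noncomputable def padicPart : ℚˣ →* ℚˣ where
  toFun w := Units.mk0 (p : ℚ) (Nat.cast_ne_zero.2 (Fact.out : p.Prime).ne_zero) ^ padicValRat p w
  map_one' := by simp
  map_mul' x y := by simp [padicValRat.mul, zpow_add]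

@[simp]
lemma coe_padicPart (w : ℚˣ) : (padicPart p w : ℚ) = p ^ padicValRat p w := by
  simp [padicPart]

lemma closure_le_comap_padicPart {S : Set ℚˣ}
    (hS : ∀ s ∈ S, ∃ q k : ℕ, q.Prime ∧ (s : ℚ) = q ^ k) :
    Subgroup.closure S ≤ (Subgroup.closure S).comap (padicPart p) := by
  rw [Subgroup.closure_le]
  intro s hs
  obtain ⟨q, k, hq, hsq⟩ := hS s hs
  have : Fact q.Prime := ⟨hq⟩
  by_cases hpq : p = q
  · subst hpq
    have hs_eq : padicPart p s = s := Units.ext <| by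
      simp [hsq, padicValRat.pow, padicValRat.self (Fact.out : p.Prime).one_lt]
    simpa [hs_eq] using Subgroup.subset_closure hs
  · have hs_eq : padicPart p s = 1 := Units.ext <| by
      simp [hsq, padicValRat.pow, padicValNat_primes hpq]
    simp [hs_eq]

lemma mem_of_forall_padicPart_mem {H : Subgroup ℚˣ} {u : ℚˣ} (hu : 0 < (u : ℚ))
    (h : ∀ (p : ℕ) [Fact p.Prime], padicPart p u ∈ H) : u ∈ H := by
  set m := (u : ℚ).num.natAbs + (u : ℚ).den + 1
  have hparts : ∀ p ∈ m.primesBelow, ∃ w ∈ H, (w : ℚ) = p ^ padicValRat p u := fun p hp ↦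
    have : Fact p.Prime := ⟨Nat.prime_of_mem_primesBelow hp⟩
    ⟨_, h p, coe_padicPart p u⟩
  choose! w hwH hw using hparts
  have hu : u = ∏ p ∈ m.primesBelow, w p := by
    ext
    rw [Units.coe_prod, Finset.prod_congr rfl hw,
      prod_primesBelow_zpow_padicValRat hu (by omega) (by omega)]
  exact hu ▸ Subgroup.prod_mem _ hwH

end Rat

section IdealNorms

variable {K : Type*} [Field K] [NumberField K]

variable (K) in
def primeIdealNorms : Set ℚˣ :=
  {w | ∃ v : HeightOneSpectrum (𝓞 K), (w : ℚ) = Ideal.absNorm v.asIdeal}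

lemma exists_prime_pow_of_mem_primeIdealNorms {w : ℚˣ} (hw : w ∈ primeIdealNorms K) :
    ∃ q k : ℕ, q.Prime ∧ (w : ℚ) = q ^ k := by
  obtain ⟨v, hv⟩ := hw
  have := Ideal.Quotient.field v.asIdeal
  have : Fintype (𝓞 K ⧸ v.asIdeal) := Fintype.ofFinite _
  obtain ⟨q, k, hq, -, hk⟩ :=
    (isPrimePow_nat_iff _).1 (FiniteField.isPrimePow_card (𝓞 K ⧸ v.asIdeal))
  refine ⟨q, k, hq, ?_⟩
  rw [hv, Ideal.absNorm_apply, Submodule.cardQuot_apply, Nat.card_eq_fintype_card, ← hk]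
  norm_cast

lemma exists_mem_closure_primeIdealNorms_eq_absNorm {J : Ideal (𝓞 K)} (hJ : J ≠ ⊥) :
    ∃ w ∈ Subgroup.closure (primeIdealNorms K), (w : ℚ) = Ideal.absNorm J := by
  induction J using UniqueFactorizationMonoid.induction_on_prime with
  | h₁ => exact absurd rfl hJ
  | h₂ J hJu => exact ⟨1, one_mem _, by simp [Ideal.isUnit_iff.1 hJu]⟩
  | h₃ J P hJ0 hP ih =>
    obtain ⟨w, hw, hwJ⟩ := ih hJ0
    let v : HeightOneSpectrum (𝓞 K) := ⟨P, Ideal.isPrime_of_prime hP, hP.ne_zero⟩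
    have hP0 : (Ideal.absNorm P : ℚ) ≠ 0 := by
      simpa [Ideal.absNorm_eq_zero_iff] using hP.ne_zero
    refine ⟨Units.mk0 _ hP0 * w, mul_mem (Subgroup.subset_closure ⟨v, rfl⟩) hw, ?_⟩
    simp [hwJ]

lemma idealNorms_eq_closure_primeIdealNorms :
    idealNorms K = Subgroup.closure (primeIdealNorms K) := by
  refine le_antisymm ?_ ((Subgroup.closure_le _).2 ?_)
  · rintro u ⟨I, hI, hIu⟩
    obtain ⟨a, J, ha, rfl⟩ := I.exists_eq_spanSingleton_mul
    have hJ : J ≠ ⊥ := by rintro rfl; simp at hI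
    obtain ⟨w₁, hw₁, hw₁a⟩ := exists_mem_closure_primeIdealNorms_eq_absNorm
      (J := Ideal.span {a}) (by simpa using ha)
    obtain ⟨w₂, hw₂, hw₂J⟩ := exists_mem_closure_primeIdealNorms_eq_absNorm hJ
    convert mul_mem (inv_mem hw₁) hw₂
    ext
    rw [← hIu, ← FractionalIdeal.spanSingleton_inv, ← FractionalIdeal.coeIdeal_span_singleton,
      map_mul, map_inv₀, FractionalIdeal.coeIdeal_absNorm, FractionalIdeal.coeIdeal_absNorm,
      Units.val_mul, Units.val_inv_eq_inv_val, hw₁a, hw₂J]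
  · rintro w ⟨v, hv⟩
    exact ⟨v.asIdeal, by simpa using v.ne_bot, by rw [FractionalIdeal.coeIdeal_absNorm, hv]⟩

lemma padicPart_mem_idealNorms (p : ℕ) [Fact p.Prime] {w : ℚˣ} (hw : w ∈ idealNorms K) :
    Rat.padicPart p w ∈ idealNorms K := by
  rw [idealNorms_eq_closure_primeIdealNorms] at hw ⊢
  exact Rat.closure_le_comap_padicPart p (fun _ ↦ exists_prime_pow_of_mem_primeIdealNorms) hw

lemma exists_mem_idealNorms_eq_abs_norm {x : K} (hx : x ≠ 0) :
    ∃ w ∈ idealNorms K, (w : ℚ) = |Algebra.norm ℚ x| :=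
  ⟨Units.mk0 _ (abs_ne_zero.2 (Algebra.norm_ne_zero_iff.2 hx)),
    ⟨FractionalIdeal.spanSingleton _ x, FractionalIdeal.spanSingleton_ne_zero_iff.2 hx,
      FractionalIdeal.absNorm_span_singleton (𝓞 K) x⟩, rfl⟩

end IdealNorms

/-- A positive rational which is an everywhere local norm from `K` is the
norm of a nonzero fractional ideal of `K`. -/
theorem idealNorm_of_posLocalNorm (K : Type*) [Field K] [NumberField K] (u : ℚˣ)
    (hpos : 0 < (u : ℚ)) (hloc : u ∈ everywhereLocalNorms ℚ K) :
    ∃ I : FractionalIdeal (𝓞 K)⁰ K, I ≠ 0 ∧ FractionalIdeal.absNorm I = (u : ℚ) := by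
  have hfin : ∀ v : HeightOneSpectrum (𝓞 ℚ), u ∈ localNormsAt ℚ K (v.adicCompletion ℚ) :=
    Subgroup.mem_iInf.1 (Subgroup.mem_inf.1 hloc).1
  suffices u ∈ idealNorms K from this
  refine Rat.mem_of_forall_padicPart_mem hpos fun p _ ↦ ?_
  obtain ⟨x, hx0, hx⟩ := exists_padicValRat_norm_eq_of_mem_localNormsAt
    (p := ⟨p, Fact.out⟩) (hfin _)
  obtain ⟨w, hw, hwx⟩ := exists_mem_idealNorms_eq_abs_norm hx0
  convert padicPart_mem_idealNorms p hw using 1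
  ext
  simp [hwx, padicValRat.abs, hx]
end
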